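/- arXiv:1712.03277 — 12 statements merged into one kernel-verified Lean document; each statement's English description precedes it below -/
import Mathlib

section
/- Let (σ_i)_{i ∈ Fin n} be an abelian maximal CDP family (σ_i ∘ σ_j = σ_j ∘ σ_i for all i, j), and let (E_j)_{j ∈ Fin n} be its conjugated family. Then E_i ∘ E_j = E_{σ_i(j)} for all i, j ∈ Fin n; in particular the set {E_j} is an abelian group of permutations under composition. -/
/-!
Normalisation `σ_k(0) = k` together with commutativity forces `σ_i ∘ σ_j = σ_{σ_i(j)}`: both sides
send `σ_m(0)` to `σ_m(σ_i(j))`. Hence, for `b = E_i(E_j(x))`,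
`σ_b(σ_i(j)) = σ_{σ_b(i)}(j) = σ_{E_j(x)}(j) = x`, i.e. `E_{σ_i(j)}(x) = b`. Commutativity of the `E_j` then comes from
`σ_i(j) = σ_j(i)`.
-/

namespace PermFamily

variable {α : Type*} (σ : α → Equiv.Perm α)

theorem apply_comm_of_commute {a : α} (hnorm : ∀ i, σ i a = i)
    (hab : ∀ i j, σ i * σ j = σ j * σ i) (i j : α) : σ i j = σ j i := by
  simpa only [Equiv.Perm.mul_apply, hnorm] using congrArg (· a) (hab i j)

theorem mul_eq_apply_of_commute {a : α} (hnorm : ∀ i, σ i a = i)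
    (hab : ∀ i j, σ i * σ j = σ j * σ i) (i j : α) : σ i * σ j = σ (σ i j) := by
  ext x
  rw [← hnorm x]
  calc (σ i * σ j) (σ x a) = (σ x * (σ i * σ j)) a := by
        rw [← Equiv.Perm.mul_apply, mul_assoc, hab j x, ← mul_assoc, hab i x, mul_assoc]
    _ = σ x (σ (σ i j) a) := by simp only [Equiv.Perm.mul_apply, hnorm]
    _ = σ (σ i j) (σ x a) := by rw [← Equiv.Perm.mul_apply, ← Equiv.Perm.mul_apply, hab]

variable {σ} {E : α → Equiv.Perm α}

theorem apply_conj_apply (hE : ∀ j k, E j (σ k j) = k) (j x : α) : σ (E j x) j = x :=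
  (E j).injective (hE j _)

theorem conj_mul_conj (hE : ∀ j k, E j (σ k j) = k)
    (hmul : ∀ i j, σ i * σ j = σ (σ i j)) (i j : α) : E i * E j = E (σ i j) := by
  ext x
  set b := E i (E j x)
  have hb : σ b (σ i j) = x := by
    rw [← Equiv.Perm.mul_apply, hmul, apply_conj_apply hE, apply_conj_apply hE]
  change b = E (σ i j) x
  rw [← hb, hE]

end PermFamily

theorem conjugated_family_comp_law_general {n : ℕ} [NeZero n] (σ : Fin n → Equiv.Perm (Fin n))
    (hnorm : ∀ i, σ i 0 = i)
    (hab : ∀ i j, σ i * σ j = σ j * σ i)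
    (E : Fin n → Equiv.Perm (Fin n)) (hE : ∀ j k, E j (σ k j) = k) :
    (∀ i j, E i * E j = E (σ i j)) ∧ (∀ i j, E i * E j = E j * E i) := by
  have hcomp := PermFamily.conj_mul_conj hE (PermFamily.mul_eq_apply_of_commute σ hnorm hab)
  refine ⟨hcomp, fun i j => ?_⟩
  rw [hcomp, hcomp, PermFamily.apply_comm_of_commute σ hnorm hab]

/-- For an abelian maximal CDP family with conjugated family `(E_j)`:
`E_i ∘ E_j = E_{σ_i(j)}`; in particular the `E_j` commute. -/
theorem conjugated_family_comp_law {n : ℕ} [NeZero n] (σ : Fin n → Equiv.Perm (Fin n))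
    (hcdp : ∀ i j, i ≠ j → ∀ k, σ i k ≠ σ j k)
    (hnorm : ∀ i, σ i 0 = i)
    (hab : ∀ i j, σ i * σ j = σ j * σ i)
    (E : Fin n → Equiv.Perm (Fin n)) (hE : ∀ j k, E j (σ k j) = k) :
    (∀ i j, E i * E j = E (σ i j)) ∧ (∀ i j, E i * E j = E j * E i) :=
  conjugated_family_comp_law_general σ hnorm hab E hE
end

section
/- Let (σ_i)_{i ∈ Fin n} be an abelian maximal CDP family (σ_i ∘ σ_j = σ_j ∘ σ_i for all i, j), and let (E_j)_{j ∈ Fin n} be its conjugated family. Then E_i = σ_i⁻¹ for every i ∈ Fin n. -/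
open Equiv

theorem Equiv.Perm.apply_comm_of_commute_of_apply_base {α : Type*} {σ : α → Perm α} {a : α}
    (hbase : ∀ i, σ i a = i) (hcomm : ∀ i j, Commute (σ i) (σ j)) (i j : α) :
    σ i j = σ j i :=
  calc σ i j = (σ i * σ j) a := by rw [Perm.mul_apply, hbase]
    _ = (σ j * σ i) a := by rw [(hcomm i j).eq]
    _ = σ j i := by rw [Perm.mul_apply, hbase]

theorem conjugated_family_eq_inv_general {n : ℕ} [NeZero n] (σ : Fin n → Equiv.Perm (Fin n))
    (hnorm : ∀ i, σ i 0 = i)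
    (hab : ∀ i j, σ i * σ j = σ j * σ i)
    (E : Fin n → Equiv.Perm (Fin n)) (hE : ∀ j k, E j (σ k j) = k) :
    ∀ i, E i = (σ i)⁻¹ := by
  intro i
  refine eq_inv_of_mul_eq_one_left (Perm.ext fun k => ?_)
  rw [Perm.mul_apply, Perm.apply_comm_of_commute_of_apply_base hnorm hab, hE, Perm.one_apply]

/-- For an abelian maximal CDP family with conjugated family `(E_j)`: `E_i = σ_i⁻¹`. -/
theorem conjugated_family_eq_inv {n : ℕ} [NeZero n] (σ : Fin n → Equiv.Perm (Fin n))
    (hcdp : ∀ i j, i ≠ j → ∀ k, σ i k ≠ σ j k)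
    (hnorm : ∀ i, σ i 0 = i)
    (hab : ∀ i j, σ i * σ j = σ j * σ i)
    (E : Fin n → Equiv.Perm (Fin n)) (hE : ∀ j k, E j (σ k j) = k) :
    ∀ i, E i = (σ i)⁻¹ :=
  conjugated_family_eq_inv_general σ hnorm hab E hE
end

section
/- Let (σ_i)_{i ∈ Fin n} be a maximal CDP family. If the family is abelian (σ_i ∘ σ_j = σ_j ∘ σ_i for all i, j), then σ_0 is the identity permutation, σ_i ∘ σ_j = σ_{σ_i(j)} for all i, j, and for every i there exists j with σ_i⁻¹ = σ_j; hence the set {σ_i : i ∈ Fin n} is an abelian group of permutations under composition. Conversely, if the set {σ_i} is an abelian group under composition then the family is abelian. Thus a maximal CDP family is abelian if and only if it is an abelian group of permutations. -/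
/-!
Commutation forces the family to be symmetric: `σ i j = σ i (σ j 0) = σ j (σ i 0) = σ j i`.
Hence `σ 0 k = σ k 0 = k`, and evaluating `σ i * σ j` at `k` gives
`σ i (σ k j) = σ k (σ i j) = σ (σ i j) k`, so the family is closed under composition, with
`σ ((σ i)⁻¹ 0)` inverse to `σ i`.
-/

section NormalizedFamily

variable {α : Type*} {σ : α → Equiv.Perm α} {a : α}

theorem apply_comm_of_commute (hnorm : ∀ i, σ i a = i) (hcomm : ∀ i j, Commute (σ i) (σ j))
    (i j : α) : σ i j = σ j i := by
  simpa only [Equiv.Perm.mul_apply, hnorm] using congrArg (· a) (hcomm i j).eq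

theorem eq_one_of_commute (hnorm : ∀ i, σ i a = i) (hcomm : ∀ i j, Commute (σ i) (σ j)) :
    σ a = 1 :=
  Equiv.ext fun k => (apply_comm_of_commute hnorm hcomm a k).trans (hnorm k)

theorem mul_eq_apply_of_commute (hnorm : ∀ i, σ i a = i) (hcomm : ∀ i j, Commute (σ i) (σ j))
    (i j : α) : σ i * σ j = σ (σ i j) := by
  have hsymm := apply_comm_of_commute hnorm hcomm
  refine Equiv.ext fun k => ?_
  calc (σ i * σ j) k = σ i (σ k j) := by rw [Equiv.Perm.mul_apply, hsymm j k]
    _ = σ k (σ i j) := by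
      simpa only [Equiv.Perm.mul_apply] using congrArg (· j) (hcomm i k).eq
    _ = σ (σ i j) k := hsymm k (σ i j)

theorem inv_eq_of_commute (hnorm : ∀ i, σ i a = i) (hcomm : ∀ i j, Commute (σ i) (σ j))
    (i : α) : (σ i)⁻¹ = σ ((σ i)⁻¹ a) := by
  refine inv_eq_of_mul_eq_one_right ?_
  rw [mul_eq_apply_of_commute hnorm hcomm, Equiv.Perm.coe_inv, Equiv.apply_symm_apply,
    eq_one_of_commute hnorm hcomm]

end NormalizedFamily

theorem abelian_iff_abelian_group_general {n : ℕ} [NeZero n] (σ : Fin n → Equiv.Perm (Fin n))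
    (hnorm : ∀ i, σ i 0 = i) :
    ((∀ i j, σ i * σ j = σ j * σ i) →
      (σ 0 = 1 ∧ (∀ i j, σ i * σ j = σ (σ i j)) ∧ (∀ i, ∃ j, (σ i)⁻¹ = σ j))) ∧
    ((∀ i j, σ i * σ j = σ j * σ i) ↔
      ((∀ i j, ∃ k, σ i * σ j = σ k) ∧ (∀ i, ∃ j, (σ i)⁻¹ = σ j) ∧
        (∀ i j, σ i * σ j = σ j * σ i))) := by
  have inv_mem (hcomm : ∀ i j, Commute (σ i) (σ j)) (i : Fin n) : ∃ j, (σ i)⁻¹ = σ j :=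
    ⟨_, inv_eq_of_commute hnorm hcomm i⟩
  refine ⟨fun hcomm => ⟨eq_one_of_commute hnorm hcomm, mul_eq_apply_of_commute hnorm hcomm,
      inv_mem hcomm⟩,
    fun hcomm => ⟨fun i j => ⟨_, mul_eq_apply_of_commute hnorm hcomm i j⟩, inv_mem hcomm, hcomm⟩,
    fun h => h.2.2⟩

/-- A maximal CDP family is abelian iff it forms an abelian group of permutations under
composition. Moreover, if it is abelian then `σ_0 = 1`, `σ_i ∘ σ_j = σ_{σ_i(j)}`, and
every inverse `σ_i⁻¹` is again a member of the family. -/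
theorem abelian_iff_abelian_group {n : ℕ} [NeZero n] (σ : Fin n → Equiv.Perm (Fin n))
    (hcdp : ∀ i j, i ≠ j → ∀ k, σ i k ≠ σ j k)
    (hnorm : ∀ i, σ i 0 = i) :
    ((∀ i j, σ i * σ j = σ j * σ i) →
      (σ 0 = 1 ∧ (∀ i j, σ i * σ j = σ (σ i j)) ∧ (∀ i, ∃ j, (σ i)⁻¹ = σ j))) ∧
    ((∀ i j, σ i * σ j = σ j * σ i) ↔
      ((∀ i j, ∃ k, σ i * σ j = σ k) ∧ (∀ i, ∃ j, (σ i)⁻¹ = σ j) ∧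
        (∀ i j, σ i * σ j = σ j * σ i))) :=
  abelian_iff_abelian_group_general σ hnorm
end

section
/- Let (σ_i)_{i ∈ Fin n} be a maximal CDP family whose underlying set is closed under composition, i.e. for all i, j there exists k with σ_i ∘ σ_j = σ_k. Then (1) σ_i ∘ σ_j = σ_{σ_i(j)} for all i, j; (2) σ_i⁻¹ = σ_j if and only if σ_i(j) = 0, if and only if σ_j(i) = 0; and (3) σ_0 is the identity permutation and for every i ≠ 0 the permutation σ_i has no fixed point. -/
/-! Evaluating at the base point `0` shows that `i ↦ σ i` is injective and that `σ i * σ j`,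
being some `σ k`, must be `σ (σ i j)`. So the family is a group acting regularly: `σ 0 = 1`,
inverses are read off from `σ i j = 0`, and a fixed point `σ i x = x` forces
`σ i * σ x = σ x`, i.e. `σ i = 1`. -/

namespace NormalizedPermFamily

variable {α : Type*} {a : α} {σ : α → Equiv.Perm α}

theorem injective (hnorm : ∀ i, σ i a = i) : Function.Injective σ := fun i j h => by
  rw [← hnorm i, ← hnorm j, h]

theorem mul_eq_apply (hnorm : ∀ i, σ i a = i) (hclosed : ∀ i j, ∃ k, σ i * σ j = σ k)
    (i j : α) : σ i * σ j = σ (σ i j) := by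
  obtain ⟨k, hk⟩ := hclosed i j
  have hk_eq : σ i j = k := by
    simpa only [Equiv.Perm.mul_apply, hnorm] using congrArg (· a) hk
  rw [hk, hk_eq]

theorem base_eq_one (hnorm : ∀ i, σ i a = i) (hmul : ∀ i j, σ i * σ j = σ (σ i j)) :
    σ a = 1 := by
  have h : σ a * σ a = σ a := by rw [hmul, hnorm]
  exact mul_eq_right.mp h

theorem inv_eq_iff_apply_eq_base (hnorm : ∀ i, σ i a = i)
    (hmul : ∀ i j, σ i * σ j = σ (σ i j)) (i j : α) : (σ i)⁻¹ = σ j ↔ σ i j = a := by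
  rw [inv_eq_iff_mul_eq_one, ← base_eq_one hnorm hmul, hmul, (injective hnorm).eq_iff]

theorem inv_eq_iff_apply_eq_base' (hnorm : ∀ i, σ i a = i)
    (hmul : ∀ i j, σ i * σ j = σ (σ i j)) (i j : α) : (σ i)⁻¹ = σ j ↔ σ j i = a := by
  rw [inv_eq_iff_eq_inv, eq_comm, inv_eq_iff_apply_eq_base hnorm hmul]

theorem apply_ne_self (hnorm : ∀ i, σ i a = i) (hmul : ∀ i j, σ i * σ j = σ (σ i j))
    {i : α} (hi : i ≠ a) (x : α) : σ i x ≠ x := by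
  intro hx
  have h : σ i * σ x = σ x := by rw [hmul, hx]
  exact hi (injective hnorm (by rw [mul_eq_right.mp h, base_eq_one hnorm hmul]))

end NormalizedPermFamily

open NormalizedPermFamily in
theorem cdp_group_properties_general {n : ℕ} [NeZero n] (σ : Fin n → Equiv.Perm (Fin n))
    (hnorm : ∀ i, σ i 0 = i)
    (hclosed : ∀ i j, ∃ k, σ i * σ j = σ k) :
    (∀ i j, σ i * σ j = σ (σ i j)) ∧
    (∀ i j, ((σ i)⁻¹ = σ j ↔ σ i j = 0) ∧ ((σ i)⁻¹ = σ j ↔ σ j i = 0)) ∧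
    (σ 0 = 1 ∧ ∀ i, i ≠ 0 → ∀ x, σ i x ≠ x) := by
  have hmul := mul_eq_apply hnorm hclosed
  exact ⟨hmul,
    fun i j => ⟨inv_eq_iff_apply_eq_base hnorm hmul i j, inv_eq_iff_apply_eq_base' hnorm hmul i j⟩,
    base_eq_one hnorm hmul, fun _ hi => apply_ne_self hnorm hmul hi⟩

/-- For a maximal CDP family closed under composition: the composition law
`σ_i ∘ σ_j = σ_{σ_i(j)}` holds, inverses are characterized by `σ_i(j) = 0 ⟺ σ_j(i) = 0`,
`σ_0` is the identity, and every other member has no fixed point. -/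
theorem cdp_group_properties {n : ℕ} [NeZero n] (σ : Fin n → Equiv.Perm (Fin n))
    (hcdp : ∀ i j, i ≠ j → ∀ k, σ i k ≠ σ j k)
    (hnorm : ∀ i, σ i 0 = i)
    (hclosed : ∀ i j, ∃ k, σ i * σ j = σ k) :
    (∀ i j, σ i * σ j = σ (σ i j)) ∧
    (∀ i j, ((σ i)⁻¹ = σ j ↔ σ i j = 0) ∧ ((σ i)⁻¹ = σ j ↔ σ j i = 0)) ∧
    (σ 0 = 1 ∧ ∀ i, i ≠ 0 → ∀ x, σ i x ≠ x) :=
  cdp_group_properties_general σ hnorm hclosed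
end

section
/- Let (σ_i)_{i ∈ Fin n} be a maximal CDP family whose underlying set is closed under composition (for all i, j there exists k with σ_i ∘ σ_j = σ_k), and let (E_j)_{j ∈ Fin n} be its conjugated family. Then σ_i ∘ E_j = E_j ∘ σ_i for all i, j ∈ Fin n, even when the family (σ_i) is not commutative. -/
/-!
Write a point as `x = σ_k(j)`, so that `E_j x = k`. By closure `σ_i * σ_k = σ_m` for some `m`,
and evaluating at `0` identifies the index: `m = σ_i(σ_k 0) = σ_i k`. Hence
`E_j(σ_i x) = E_j(σ_m j) = m = σ_i k = σ_i(E_j x)`.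
-/

section

variable {α : Type*} (σ : α → Equiv.Perm α)

theorem injective_apply_of_pairwise_ne (hcdp : ∀ i j, i ≠ j → ∀ k, σ i k ≠ σ j k) (x : α) :
    Function.Injective fun k => σ k x :=
  fun _ _ hab => by_contra fun h => hcdp _ _ h x hab

theorem surjective_apply_of_pairwise_ne [Finite α] (hcdp : ∀ i j, i ≠ j → ∀ k, σ i k ≠ σ j k)
    (x : α) : Function.Surjective fun k => σ k x :=
  Finite.injective_iff_surjective.mp (injective_apply_of_pairwise_ne σ hcdp x)

variable {σ}

theorem index_eq_apply_of_mul_eq {o : α} (hnorm : ∀ i, σ i o = i) {i k m : α}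
    (h : σ i * σ k = σ m) : m = σ i k := by
  simpa [hnorm] using (DFunLike.congr_fun h o).symm

theorem conj_apply_mul_apply {o : α} (hnorm : ∀ i, σ i o = i)
    (hclosed : ∀ i j, ∃ k, σ i * σ j = σ k) {E : α → Equiv.Perm α} (hE : ∀ j k, E j (σ k j) = k)
    (i j k : α) : E j (σ i (σ k j)) = σ i k := by
  obtain ⟨m, hm⟩ := hclosed i k
  rw [← Equiv.Perm.mul_apply (σ i), hm, hE, index_eq_apply_of_mul_eq hnorm hm]

end

/-- For a maximal CDP family closed under composition, each member commutes with each
member of the conjugated family. -/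
theorem cdp_commutes_with_conjugated {n : ℕ} [NeZero n] (σ : Fin n → Equiv.Perm (Fin n))
    (hcdp : ∀ i j, i ≠ j → ∀ k, σ i k ≠ σ j k)
    (hnorm : ∀ i, σ i 0 = i)
    (hclosed : ∀ i j, ∃ k, σ i * σ j = σ k)
    (E : Fin n → Equiv.Perm (Fin n)) (hE : ∀ j k, E j (σ k j) = k) :
    ∀ i j, σ i * E j = E j * σ i := by
  intro i j
  ext x
  obtain ⟨k, rfl⟩ := surjective_apply_of_pairwise_ne σ hcdp j x
  simp only [Equiv.Perm.mul_apply, hE, conj_apply_mul_apply hnorm hclosed hE]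
end

section
/- Let σ and τ be completely different permutations of Fin n and let A, B ∈ Matrix (Fin n) (Fin n) ℂ be arbitrary. Then the matrix product ρ[A,σ] * ρ[B,τ] is the zero matrix. -/
/-- The CDP matrix of `A` and a permutation `σ`:
`ρ[A,σ]_{(i,p),(j,q)} = A_{ij}` if `p = σ i` and `q = σ j`, and `0` otherwise. -/
def cdpMatrix {n : ℕ} (A : Matrix (Fin n) (Fin n) ℂ) (σ : Equiv.Perm (Fin n)) :
    Matrix (Fin n × Fin n) (Fin n × Fin n) ℂ :=
  Matrix.of fun x y => if x.2 = σ x.1 ∧ y.2 = σ y.1 then A x.1 y.1 else 0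

section

variable {n : ℕ} (A : Matrix (Fin n) (Fin n) ℂ) {σ : Equiv.Perm (Fin n)}

theorem cdpMatrix_apply_eq_zero_of_row {x : Fin n × Fin n} (hx : x.2 ≠ σ x.1)
    (y : Fin n × Fin n) : cdpMatrix A σ x y = 0 := by
  simp [cdpMatrix, hx]

theorem cdpMatrix_apply_eq_zero_of_col (x : Fin n × Fin n) {y : Fin n × Fin n}
    (hy : y.2 ≠ σ y.1) : cdpMatrix A σ x y = 0 := by
  simp [cdpMatrix, hy]

end

/-- If `σ` and `τ` are completely different permutations then `ρ[A,σ] * ρ[B,τ] = 0`. -/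
theorem cdpMatrix_mul_eq_zero {n : ℕ} (σ τ : Equiv.Perm (Fin n))
    (h : ∀ i, σ i ≠ τ i) (A B : Matrix (Fin n) (Fin n) ℂ) :
    cdpMatrix A σ * cdpMatrix B τ = 0 := by
  ext x y
  rw [Matrix.mul_apply, Matrix.zero_apply]
  refine Finset.sum_eq_zero fun ⟨j, q⟩ _ => ?_
  by_cases hq : q = σ j
  · have hτ : q ≠ τ j := hq ▸ h j
    rw [cdpMatrix_apply_eq_zero_of_row B (x := (j, q)) hτ, mul_zero]
  · rw [cdpMatrix_apply_eq_zero_of_col A x (y := (j, q)) hq, zero_mul]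
end

section
/- Let σ be a permutation of Fin n, A ∈ Matrix (Fin n) (Fin n) ℂ, λ ∈ ℂ, and x : Fin n → ℂ with A.mulVec x = λ • x. Define w : Fin n × Fin n → ℂ by w(j,p) = x(j) if p = σ(j) and w(j,p) = 0 otherwise. Then ρ[A,σ].mulVec w = λ • w; moreover, for any permutation τ completely different from σ and any B ∈ Matrix (Fin n) (Fin n) ℂ, ρ[B,τ].mulVec w = 0. -/
open Matrix

namespace cdpMatrix

variable {n : ℕ}

/-- The vector `w` of the statement. -/
def liftVec (σ : Equiv.Perm (Fin n)) (x : Fin n → ℂ) : Fin n × Fin n → ℂ :=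
  fun p => if p.2 = σ p.1 then x p.1 else 0

theorem liftVec_apply_self (σ : Equiv.Perm (Fin n)) (x : Fin n → ℂ) (j : Fin n) :
    liftVec σ x (j, σ j) = x j :=
  if_pos rfl

theorem liftVec_apply_of_ne {σ τ : Equiv.Perm (Fin n)} (x : Fin n → ℂ) {j : Fin n}
    (h : σ j ≠ τ j) : liftVec σ x (j, τ j) = 0 :=
  if_neg h.symm

theorem liftVec_smul (σ : Equiv.Perm (Fin n)) (c : ℂ) (x : Fin n → ℂ) :
    liftVec σ (c • x) = c • liftVec σ x := by
  ext p
  by_cases hp : p.2 = σ p.1 <;> simp [liftVec, hp]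

theorem liftVec_zero (σ : Equiv.Perm (Fin n)) : liftVec σ 0 = 0 := by
  ext p
  simp [liftVec]

theorem mulVec_eq_liftVec (B : Matrix (Fin n) (Fin n) ℂ) (τ : Equiv.Perm (Fin n))
    (v : Fin n × Fin n → ℂ) :
    cdpMatrix B τ *ᵥ v = liftVec τ (B *ᵥ fun j => v (j, τ j)) := by
  ext ⟨i, p⟩
  by_cases hp : p = τ i <;>
    simp [cdpMatrix, liftVec, mulVec, dotProduct, hp, Fintype.sum_prod_type, ite_and]

end cdpMatrix

open cdpMatrix in
/-- If `x` is an eigenvector of `A` with eigenvalue `λ`, then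
`w(j,p) = x j` if `p = σ j` (and `0` otherwise) is an eigenvector of `ρ[A,σ]` with the
same eigenvalue, and `w` is annihilated by `ρ[B,τ]` for any `τ` completely different
from `σ`. -/
theorem cdpMatrix_eigenvector {n : ℕ} (σ : Equiv.Perm (Fin n))
    (A : Matrix (Fin n) (Fin n) ℂ) (lam : ℂ) (x : Fin n → ℂ)
    (hx : A.mulVec x = lam • x) :
    (cdpMatrix A σ).mulVec (fun p => if p.2 = σ p.1 then x p.1 else 0) =
      lam • (fun p => if p.2 = σ p.1 then x p.1 else 0) ∧
    (∀ τ : Equiv.Perm (Fin n), (∀ i, σ i ≠ τ i) → ∀ B : Matrix (Fin n) (Fin n) ℂ,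
      (cdpMatrix B τ).mulVec (fun p => if p.2 = σ p.1 then x p.1 else 0) = 0) := by
  refine ⟨?_, fun τ hστ B => ?_⟩
  · change cdpMatrix A σ *ᵥ liftVec σ x = lam • liftVec σ x
    simp only [mulVec_eq_liftVec, liftVec_apply_self, hx, liftVec_smul]
  · change cdpMatrix B τ *ᵥ liftVec σ x = 0
    simp only [mulVec_eq_liftVec, liftVec_apply_of_ne x (hστ _), ← Pi.zero_def, mulVec_zero,
      liftVec_zero]
end

section
/- Let (σ_k)_{k ∈ Fin n} be a maximal CDP family and (A^k)_{k ∈ Fin n} arbitrary matrices in Matrix (Fin n) (Fin n) ℂ, and let ρ[𝒜,Σ] = Σ_k ρ[A^k,σ_k]. Then trace(ρ[𝒜,Σ]ᴴ * ρ[𝒜,Σ]) = Σ_k trace((A^k)ᴴ * A^k); equivalently, the squared Frobenius norm of ρ[𝒜,Σ] equals the sum of the squared Frobenius norms of the matrices A^k, independently of the CDP family. -/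
/-!
Pairing matrices by `(X, Y) ↦ trace (Xᴴ * Y)` is the entrywise sum `∑ star (X i j) * Y i j`, so
matrices with disjoint supports are orthogonal and the squared Frobenius norm of a sum of pairwise
orthogonal matrices is the sum of their squared norms. The CDP matrix `ρ[A,σ]` is supported on the
rows `(i, σ i)`, and completely different permutations have disjoint graphs, so the summands of
`ρ[𝒜,Σ]` are pairwise orthogonal; each one carries exactly the entries of `A^k`.
-/

open Matrix

namespace Matrix

variable {ι m n R : Type*} [Fintype m] [Fintype n]

theorem trace_conjTranspose_mul_eq_sum [AddCommMonoid R] [Mul R] [Star R] (X Y : Matrix m n R) :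
    (Xᴴ * Y).trace = ∑ i, ∑ j, star (X i j) * Y i j := by
  rw [← star_vec_dotProduct_vec, dotProduct, Fintype.sum_prod_type, Finset.sum_comm]
  rfl

theorem trace_conjTranspose_mul_eq_zero_of_disjoint [NonUnitalNonAssocSemiring R] [StarRing R]
    {X Y : Matrix m n R} (h : ∀ i j, X i j = 0 ∨ Y i j = 0) : (Xᴴ * Y).trace = 0 := by
  rw [trace_conjTranspose_mul_eq_sum]
  refine Finset.sum_eq_zero fun i _ => Finset.sum_eq_zero fun j _ => ?_
  rcases h i j with hX | hY
  · rw [hX, star_zero, zero_mul]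
  · rw [hY, mul_zero]

theorem trace_conjTranspose_mul_sum_of_pairwise [NonUnitalNonAssocSemiring R] [StarAddMonoid R]
    [Fintype ι] (M : ι → Matrix m n R) (h : Pairwise fun k l => ((M k)ᴴ * M l).trace = 0) :
    ((∑ k, M k)ᴴ * ∑ k, M k).trace = ∑ k, ((M k)ᴴ * M k).trace := by
  simp only [conjTranspose_sum, Matrix.sum_mul, Matrix.mul_sum, trace_sum]
  refine Finset.sum_congr rfl fun k _ => ?_
  exact Finset.sum_eq_single k (fun l _ hlk => h hlk) (absurd (Finset.mem_univ k))

end Matrix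

section cdpMatrix

variable {n : ℕ}

theorem cdpMatrix_apply_of_ne {A : Matrix (Fin n) (Fin n) ℂ} {σ : Equiv.Perm (Fin n)}
    {x : Fin n × Fin n} (hx : x.2 ≠ σ x.1) (y : Fin n × Fin n) : cdpMatrix A σ x y = 0 :=
  if_neg fun h => hx h.1

theorem trace_conjTranspose_cdpMatrix_mul_cdpMatrix_of_ne (A B : Matrix (Fin n) (Fin n) ℂ)
    {σ τ : Equiv.Perm (Fin n)} (h : ∀ i, σ i ≠ τ i) :
    ((cdpMatrix A σ)ᴴ * cdpMatrix B τ).trace = 0 := by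
  refine trace_conjTranspose_mul_eq_zero_of_disjoint fun x y => ?_
  by_cases hx : x.2 = σ x.1
  · exact .inr (cdpMatrix_apply_of_ne (fun hτ => h x.1 (hx ▸ hτ)) y)
  · exact .inl (cdpMatrix_apply_of_ne hx y)

theorem trace_conjTranspose_cdpMatrix_mul_self (A : Matrix (Fin n) (Fin n) ℂ)
    (σ : Equiv.Perm (Fin n)) :
    ((cdpMatrix A σ)ᴴ * cdpMatrix A σ).trace = (Aᴴ * A).trace := by
  simp only [cdpMatrix, ite_and, trace_conjTranspose_mul_eq_sum, of_apply, RCLike.star_def,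
    mul_ite, mul_zero, Finset.sum_ite_irrel, Fintype.sum_prod_type, Finset.sum_ite_eq',
    Finset.mem_univ, ↓reduceIte, Finset.sum_const_zero]

end cdpMatrix

theorem cdpMatrix_frobenius_general {n : ℕ} (σ : Fin n → Equiv.Perm (Fin n))
    (hcdp : ∀ i j, i ≠ j → ∀ k, σ i k ≠ σ j k)
    (A : Fin n → Matrix (Fin n) (Fin n) ℂ) :
    Matrix.trace ((∑ k, cdpMatrix (A k) (σ k))ᴴ * (∑ k, cdpMatrix (A k) (σ k))) =
      ∑ k, Matrix.trace ((A k)ᴴ * A k) := by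
  rw [trace_conjTranspose_mul_sum_of_pairwise]
  · exact Finset.sum_congr rfl fun k _ => trace_conjTranspose_cdpMatrix_mul_self (A k) (σ k)
  · exact fun k l hkl => trace_conjTranspose_cdpMatrix_mul_cdpMatrix_of_ne _ _ (hcdp k l hkl)

/-- The squared Frobenius norm of `ρ[𝒜,Σ] = Σ_k ρ[A^k,σ_k]` equals the sum of the squared
Frobenius norms of the matrices `A^k`, independently of the CDP family. -/
theorem cdpMatrix_frobenius {n : ℕ} [NeZero n] (σ : Fin n → Equiv.Perm (Fin n))
    (hcdp : ∀ i j, i ≠ j → ∀ k, σ i k ≠ σ j k)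
    (hnorm : ∀ i, σ i 0 = i)
    (A : Fin n → Matrix (Fin n) (Fin n) ℂ) :
    Matrix.trace ((∑ k, cdpMatrix (A k) (σ k))ᴴ * (∑ k, cdpMatrix (A k) (σ k))) =
      ∑ k, Matrix.trace ((A k)ᴴ * A k) :=
  cdpMatrix_frobenius_general σ hcdp A
end

section
/- Let (σ_k)_{k ∈ Fin n} be a maximal CDP family with conjugated family (E_j)_{j ∈ Fin n}, and let (A^k)_{k ∈ Fin n} be matrices in Matrix (Fin n) (Fin n) ℂ. For each i, j ∈ Fin n, the (i,j)-block of ρ[𝒜,Σ], namely the matrix B_{ij} with entries (B_{ij})_{pq} = ρ[𝒜,Σ]_{(i,p),(j,q)}, satisfies B_{ij} = m(E_i)ᵀ * D_{ij} * m(E_j), where D_{ij} is the diagonal matrix with diagonal entries (D_{ij})_{kk} = (A^k)_{ij} and m(π) is the permutation matrix of π. -/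
/-! The `(p, q)` entry of the block `B_{ij}` collects the `k` with `σ_k(i) = p` and `σ_k(j) = q`,
i.e. `k = E_i(p) = E_j(q)`. So `B_{ij}` is `D_{ij}` with its rows reindexed by `E_i` and its columns
by `E_j`, which is exactly what multiplying by `m(E_i)ᵀ` and `m(E_j)` does. -/

open Matrix

/-- The permutation matrix of a permutation `π` of `Fin n` over `ℂ`. -/
def permMatrix {n : ℕ} (π : Equiv.Perm (Fin n)) : Matrix (Fin n) (Fin n) ℂ :=
  Matrix.of fun i j => if i = π j then 1 else 0

theorem permMatrix_eq_permMatrix_inv {n : ℕ} (π : Equiv.Perm (Fin n)) :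
    permMatrix π = π⁻¹.permMatrix ℂ := by
  ext i j
  simp [permMatrix, PEquiv.toMatrix_apply, Equiv.eq_symm_apply, eq_comm]

theorem transpose_permMatrix_mul_mul_permMatrix {n : ℕ} (π τ : Equiv.Perm (Fin n))
    (M : Matrix (Fin n) (Fin n) ℂ) :
    (permMatrix π)ᵀ * M * permMatrix τ = M.submatrix π τ := by
  rw [permMatrix_eq_permMatrix_inv, permMatrix_eq_permMatrix_inv, transpose_permMatrix, inv_inv,
    PEquiv.toMatrix_toPEquiv_mul, PEquiv.mul_toMatrix_toPEquiv, submatrix_submatrix]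
  rfl

theorem eq_apply_iff_of_leftInverse {ι α : Type*} {f : ι → α} {e : α ≃ ι}
    (h : Function.LeftInverse e f) (p : α) (k : ι) : p = f k ↔ k = e p := by
  rw [show f = e.symm from funext fun k => e.eq_symm_apply.mpr (h k), e.eq_symm_apply, eq_comm]

theorem sum_cdpMatrix_apply_eq_diagonal {n : ℕ} {σ E : Fin n → Equiv.Perm (Fin n)}
    (hE : ∀ j k, E j (σ k j) = k) (A : Fin n → Matrix (Fin n) (Fin n) ℂ) (i j p q : Fin n) :
    (∑ k, cdpMatrix (A k) (σ k)) (i, p) (j, q) = diagonal (fun k => A k i j) (E i p) (E j q) := by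
  have key : ∀ m r k, r = σ k m ↔ k = E m r := fun m => eq_apply_iff_of_leftInverse (hE m)
  simp only [Matrix.sum_apply, cdpMatrix, of_apply, key, diagonal_apply]
  by_cases h : E i p = E j q
  · simp [h]
  · rw [if_neg h]
    exact Finset.sum_eq_zero fun k _ => if_neg fun ⟨hki, hkj⟩ => h (hki ▸ hkj)

theorem cdpMatrix_block_structure_general {n : ℕ} (σ : Fin n → Equiv.Perm (Fin n))
    (E : Fin n → Equiv.Perm (Fin n)) (hE : ∀ j k, E j (σ k j) = k)
    (A : Fin n → Matrix (Fin n) (Fin n) ℂ) (i j : Fin n) :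
    (Matrix.of fun p q => (∑ k, cdpMatrix (A k) (σ k)) (i, p) (j, q)) =
      (permMatrix (E i))ᵀ * Matrix.diagonal (fun k => A k i j) * permMatrix (E j) := by
  rw [transpose_permMatrix_mul_mul_permMatrix]
  ext p q
  exact sum_cdpMatrix_apply_eq_diagonal hE A i j p q

/-- The `(i,j)`-block of `ρ[𝒜,Σ]` equals `m(E_i)ᵀ * D_{ij} * m(E_j)`, where `D_{ij}` is
diagonal with entries `(A^k)_{ij}` and `(E_j)` is the conjugated family. -/
theorem cdpMatrix_block_structure {n : ℕ} [NeZero n] (σ : Fin n → Equiv.Perm (Fin n))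
    (hcdp : ∀ i j, i ≠ j → ∀ k, σ i k ≠ σ j k)
    (hnorm : ∀ i, σ i 0 = i)
    (E : Fin n → Equiv.Perm (Fin n)) (hE : ∀ j k, E j (σ k j) = k)
    (A : Fin n → Matrix (Fin n) (Fin n) ℂ) (i j : Fin n) :
    (Matrix.of fun p q => (∑ k, cdpMatrix (A k) (σ k)) (i, p) (j, q)) =
      (permMatrix (E i))ᵀ * Matrix.diagonal (fun k => A k i j) * permMatrix (E j) :=
  cdpMatrix_block_structure_general σ E hE A i j
end

section
/- Let (σ_k)_{k ∈ Fin n} be a maximal CDP family and (A^k)_{k ∈ Fin n} matrices in Matrix (Fin n) (Fin n) ℂ. Then (1) ρ[𝒜,Σ] is Hermitian if and only if every A^k is Hermitian, and (2) ρ[𝒜,Σ] is positive semidefinite if and only if every A^k is positive semidefinite. -/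
/-!
Because the `σ_k` are pairwise completely different, for each `i` the map `k ↦ σ_k(i)` is a
bijection, so `(i, k) ↦ (i, σ_k(i))` is a permutation of `Fin n × Fin n`. Reindexing
`∑ k, ρ[A^k, σ_k]` along it gives the block-diagonal matrix with blocks `A^k`, and both being
Hermitian and being positive semidefinite are invariant under reindexing and hold for a
block-diagonal matrix exactly when they hold for every block.
-/

open ComplexOrder

open Matrix Function

namespace Matrix

variable {m o R : Type*} [Fintype m] [Fintype o] [DecidableEq o]

theorem star_dotProduct_blockDiagonal_mulVec [NonUnitalNonAssocSemiring R] [Star R]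
    (M : o → Matrix m m R) (x : m × o → R) :
    star x ⬝ᵥ (blockDiagonal M *ᵥ x) =
      ∑ k, star (fun i => x (i, k)) ⬝ᵥ (M k *ᵥ fun i => x (i, k)) := by
  simp only [dotProduct, mulVec, Fintype.sum_prod_type_right, blockDiagonal_apply',
    Pi.star_apply]
  refine Finset.sum_congr rfl fun k _ => Finset.sum_congr rfl fun i _ => ?_
  simp

theorem posSemidef_blockDiagonal_iff [Ring R] [PartialOrder R] [StarRing R] [AddLeftMono R]
    {M : o → Matrix m m R} :
    (blockDiagonal M).PosSemidef ↔ ∀ k, (M k).PosSemidef := by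
  refine ⟨fun h k => ?_, fun h => ?_⟩
  · have : (blockDiagonal M).submatrix (·, k) (·, k) = M k := by ext; simp
    exact this ▸ h.submatrix _
  · refine .of_dotProduct_mulVec_nonneg (isHermitian_blockDiagonal_iff.mpr fun k => (h k).1)
      fun x => ?_
    rw [star_dotProduct_blockDiagonal_mulVec]
    exact Finset.sum_nonneg fun k _ => (h k).dotProduct_mulVec_nonneg _

end Matrix

theorem submatrix_sum_cdpMatrix_eq_blockDiagonal {n : ℕ} {σ : Fin n → Equiv.Perm (Fin n)}
    (hσ : ∀ i, Injective fun k => σ k i) (A : Fin n → Matrix (Fin n) (Fin n) ℂ) :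
    (∑ k, cdpMatrix (A k) (σ k)).submatrix
        (fun x => (x.1, σ x.2 x.1)) (fun x => (x.1, σ x.2 x.1)) = blockDiagonal A := by
  ext ⟨i, k⟩ ⟨j, k'⟩
  simp only [submatrix_apply, Matrix.sum_apply, cdpMatrix, of_apply, (hσ i).eq_iff, (hσ j).eq_iff,
    blockDiagonal_apply']
  simp [ite_and, eq_comm]

theorem cdpMatrix_hermitian_posSemidef_general {n : ℕ} (σ : Fin n → Equiv.Perm (Fin n))
    (hcdp : ∀ i j, i ≠ j → ∀ k, σ i k ≠ σ j k)
    (A : Fin n → Matrix (Fin n) (Fin n) ℂ) :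
    ((∑ k, cdpMatrix (A k) (σ k)).IsHermitian ↔ ∀ k, (A k).IsHermitian) ∧
    ((∑ k, cdpMatrix (A k) (σ k)).PosSemidef ↔ ∀ k, (A k).PosSemidef) := by
  have hcol : ∀ i, Bijective fun k => σ k i := fun i =>
    Finite.injective_iff_bijective.mp fun k l h => by_contra fun hkl => hcdp k l hkl i h
  let e := Equiv.prodShear (Equiv.refl (Fin n)) fun i => Equiv.ofBijective _ (hcol i)
  have he : (∑ k, cdpMatrix (A k) (σ k)).submatrix e e = blockDiagonal A :=
    submatrix_sum_cdpMatrix_eq_blockDiagonal (fun i => (hcol i).injective) A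
  rw [← isHermitian_submatrix_equiv e, ← posSemidef_submatrix_equiv e, he]
  exact ⟨isHermitian_blockDiagonal_iff, posSemidef_blockDiagonal_iff⟩

/-- `ρ[𝒜,Σ]` is Hermitian iff every `A^k` is Hermitian, and positive semidefinite iff
every `A^k` is positive semidefinite. -/
theorem cdpMatrix_hermitian_posSemidef {n : ℕ} [NeZero n] (σ : Fin n → Equiv.Perm (Fin n))
    (hcdp : ∀ i j, i ≠ j → ∀ k, σ i k ≠ σ j k)
    (hnorm : ∀ i, σ i 0 = i)
    (A : Fin n → Matrix (Fin n) (Fin n) ℂ) :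
    ((∑ k, cdpMatrix (A k) (σ k)).IsHermitian ↔ ∀ k, (A k).IsHermitian) ∧
    ((∑ k, cdpMatrix (A k) (σ k)).PosSemidef ↔ ∀ k, (A k).PosSemidef) :=
  cdpMatrix_hermitian_posSemidef_general σ hcdp A
end

section
/- Let σ be a permutation of Fin n and A ∈ Matrix (Fin n) (Fin n) ℂ a Hermitian matrix that is not diagonal (there exist i ≠ j with A_{ij} ≠ 0). Then the partial transpose ρ[A,σ]^{T₂} is not positive semidefinite. -/
open ComplexOrder

/-- The partial transpose (on the second factor) of a matrix indexed by `Fin n × Fin n`: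
`(X^{T₂})_{(i,p),(j,q)} = X_{(i,q),(j,p)}`. -/
def ptranspose {n : ℕ} (X : Matrix (Fin n × Fin n) (Fin n × Fin n) ℂ) :
    Matrix (Fin n × Fin n) (Fin n × Fin n) ℂ :=
  Matrix.of fun x y => X (x.1, y.2) (y.1, x.2)

/-! The entry `A i j` with `i ≠ j` sits in `ρ[A,σ]^{T₂}` at position `((i, σ j), (j, σ i))`,
while the diagonal entry at `(j, σ i)` vanishes. A positive semidefinite matrix with a zero
diagonal entry has the whole corresponding column equal to zero, so `A i j = 0`. -/

theorem Matrix.PosSemidef.apply_eq_zero_of_diag_eq_zero {ι 𝕜 : Type*} [Fintype ι] [RCLike 𝕜]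
    {M : Matrix ι ι 𝕜} (hM : M.PosSemidef) {p : ι} (hp : M p p = 0) (q : ι) : M q p = 0 := by
  classical
  have hcol : M.mulVec (Pi.single p 1) = 0 :=
    (hM.dotProduct_mulVec_zero_iff (Pi.single p 1)).mp (by simpa [Matrix.mulVec_single] using hp)
  simpa [Matrix.mulVec_single] using congrFun hcol q

theorem ptranspose_cdpMatrix_apply {n : ℕ} (A : Matrix (Fin n) (Fin n) ℂ)
    (σ : Equiv.Perm (Fin n)) (x y : Fin n × Fin n) :
    ptranspose (cdpMatrix A σ) x y = if y.2 = σ x.1 ∧ x.2 = σ y.1 then A x.1 y.1 else 0 :=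
  rfl

theorem ptranspose_cdpMatrix_not_posSemidef_general {n : ℕ} (σ : Equiv.Perm (Fin n))
    (A : Matrix (Fin n) (Fin n) ℂ)
    (i j : Fin n) (hij : i ≠ j) (hAij : A i j ≠ 0) :
    ¬ (ptranspose (cdpMatrix A σ)).PosSemidef := by
  intro h
  have hdiag : ptranspose (cdpMatrix A σ) (j, σ i) (j, σ i) = 0 := by
    simp [ptranspose_cdpMatrix_apply, σ.injective.ne hij]
  apply hAij
  simpa [ptranspose_cdpMatrix_apply] using h.apply_eq_zero_of_diag_eq_zero hdiag (i, σ j)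

/-- If `A` is Hermitian but not diagonal, then `ρ[A,σ]^{T₂}` is not positive
semidefinite. -/
theorem ptranspose_cdpMatrix_not_posSemidef {n : ℕ} (σ : Equiv.Perm (Fin n))
    (A : Matrix (Fin n) (Fin n) ℂ) (hA : A.IsHermitian)
    (i j : Fin n) (hij : i ≠ j) (hAij : A i j ≠ 0) :
    ¬ (ptranspose (cdpMatrix A σ)).PosSemidef :=
  ptranspose_cdpMatrix_not_posSemidef_general σ A i j hij hAij
end

section
/- Let (σ_k)_{k ∈ Fin n} be an abelian maximal CDP family and (A^k)_{k ∈ Fin n} matrices in Matrix (Fin n) (Fin n) ℂ with entries (A^k)_{ij} = a_{ij}^k. Then the realignment of the CDP matrix satisfies R(ρ[𝒜,Σ]) = ρ[𝒜̃,Σ] for the same CDP family Σ, where 𝒜̃ = (Ã^k) is given by (Ã^k)_{ij} = a_{i, σ_k(i)}^{σ_i⁻¹(j)}. -/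
/-- The realignment of a matrix indexed by `Fin n × Fin n`:
`R(X)_{(i,j),(k,l)} = X_{(i,k),(j,l)}`. -/
def realign {n : ℕ} (X : Matrix (Fin n × Fin n) (Fin n × Fin n) ℂ) :
    Matrix (Fin n × Fin n) (Fin n × Fin n) ℂ :=
  Matrix.of fun x y => X (x.1, y.1) (x.2, y.2)

section PermFamily

variable {α : Type*} {σ : α → Equiv.Perm α}

theorem perm_family_apply_comm {a : α} (hnorm : ∀ i, σ i a = i)
    (hab : ∀ i j, σ i * σ j = σ j * σ i) (k i : α) : σ k i = σ i k := by
  conv_lhs => rw [← hnorm i]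
  conv_rhs => rw [← hnorm k]
  exact congrArg (· a) (hab k i)

theorem perm_family_inv_apply_apply (hsymm : ∀ k i, σ k i = σ i k) (i j : α) :
    σ ((σ i)⁻¹ j) i = j :=
  (hsymm _ i).trans (Equiv.Perm.eq_inv_iff_eq.mp rfl)

theorem perm_family_apply_inv_apply_comm (hsymm : ∀ k i, σ k i = σ i k)
    (hab : ∀ i j, σ i * σ j = σ j * σ i) (i j k : α) :
    σ ((σ i)⁻¹ k) j = σ ((σ i)⁻¹ j) k := by
  set a := (σ i)⁻¹ k
  set b := (σ i)⁻¹ j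
  have hj : σ b i = j := perm_family_inv_apply_apply hsymm i j
  have hk : σ a i = k := perm_family_inv_apply_apply hsymm i k
  calc σ a j = (σ a * σ b) i := by rw [Equiv.Perm.mul_apply, hj]
    _ = (σ b * σ a) i := by rw [hab]
    _ = σ b k := by rw [Equiv.Perm.mul_apply, hk]

end PermFamily

theorem sum_cdpMatrix_apply {n : ℕ} {σ : Fin n → Equiv.Perm (Fin n)}
    (hsymm : ∀ k i, σ k i = σ i k) (A : Fin n → Matrix (Fin n) (Fin n) ℂ)
    (i p j q : Fin n) :
    (∑ k, cdpMatrix (A k) (σ k)) (i, p) (j, q) =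
      if q = σ ((σ i)⁻¹ p) j then A ((σ i)⁻¹ p) i j else 0 := by
  have hp : ∀ k, p = σ i k ↔ k = (σ i)⁻¹ p := fun _ =>
    eq_comm.trans Equiv.Perm.eq_inv_iff_eq.symm
  simp only [Matrix.sum_apply, cdpMatrix, Matrix.of_apply, hsymm _ i, hp, ite_and]
  rw [Finset.sum_ite_eq' Finset.univ, if_pos (Finset.mem_univ _)]

theorem realign_cdpMatrix_abelian_general {n : ℕ} [NeZero n] (σ : Fin n → Equiv.Perm (Fin n))
    (hnorm : ∀ i, σ i 0 = i)
    (hab : ∀ i j, σ i * σ j = σ j * σ i)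
    (A : Fin n → Matrix (Fin n) (Fin n) ℂ) :
    realign (∑ k, cdpMatrix (A k) (σ k)) =
      ∑ k, cdpMatrix (Matrix.of fun i j => A ((σ i)⁻¹ j) i (σ k i)) (σ k) := by
  have hsymm := perm_family_apply_comm hnorm hab
  ext ⟨i, j⟩ ⟨k, l⟩
  simp only [realign, Matrix.of_apply, sum_cdpMatrix_apply hsymm,
    perm_family_inv_apply_apply hsymm, perm_family_apply_inv_apply_comm hsymm hab i j k]

/-- For an abelian maximal CDP family, the realignment of `ρ[𝒜,Σ]` is `ρ[𝒜̃,Σ]` for the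
same CDP family, where `(Ã^k)_{ij} = a_{i,σ_k(i)}^{σ_i⁻¹(j)}`. -/
theorem realign_cdpMatrix_abelian {n : ℕ} [NeZero n] (σ : Fin n → Equiv.Perm (Fin n))
    (hcdp : ∀ i j, i ≠ j → ∀ k, σ i k ≠ σ j k)
    (hnorm : ∀ i, σ i 0 = i)
    (hab : ∀ i j, σ i * σ j = σ j * σ i)
    (A : Fin n → Matrix (Fin n) (Fin n) ℂ) :
    realign (∑ k, cdpMatrix (A k) (σ k)) =
      ∑ k, cdpMatrix (Matrix.of fun i j => A ((σ i)⁻¹ j) i (σ k i)) (σ k) :=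
  realign_cdpMatrix_abelian_general σ hnorm hab A
end
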